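/- Let F be a submodular function on V with F(∅) = 0 and f its Lovász extension, and for each i ∈ V let h_i : ℝ → ℝ be strictly convex and continuously differentiable with sup_{λ∈ℝ} h_i'(λ) = +∞ and inf_{λ∈ℝ} h_i'(λ) = −∞. Let x* be the unique minimizer of f(x) + Σ_{i∈V} h_i(x_i) over ℝ^V, and let T = {i ∈ V : x*_i ≥ λ̄} be a level set of x* for some λ̄ ∈ ℝ. Let y be the unique minimizer of f_T(x) + Σ_{i∈T} h_i(x_i) over ℝ^T and z the unique minimizer of f^T(x) + Σ_{i∈V∖T} h_i(x_i) over ℝ^{V∖T}, where f_T and f^T are the Lovász extensions of the restriction F_T and the contraction F^T. Then x*_j = y_j for all j ∈ T and x*_j = z_j for all j ∈ V∖T. -/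

import Mathlib

open Finset

/-- Submodularity of a set function on a finite ground set `ι`. -/
def Submodular {ι : Type} [DecidableEq ι] (F : Finset ι → ℝ) : Prop :=
  ∀ S T : Finset ι, F (S ∪ T) + F (S ∩ T) ≤ F S + F T

/-- `σ` sorts `x` in decreasing order (positions indexed by the linear order on `ι`). -/
def SortsDesc {ι : Type} [LinearOrder ι] (x : ι → ℝ) (σ : Equiv.Perm ι) : Prop :=
  ∀ j k : ι, j ≤ k → x (σ k) ≤ x (σ j)

/-- The value `Σ_k x(σ k) (F({σ j : j ≤ k}) − F({σ j : j < k}))` of the Lovász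
extension formula for a sorting permutation `σ`. -/
def lovaszVal {ι : Type} [Fintype ι] [LinearOrder ι] (F : Finset ι → ℝ) (x : ι → ℝ)
    (σ : Equiv.Perm ι) : ℝ :=
  ∑ k : ι, x (σ k) *
    (F ((Finset.univ.filter (fun j => j ≤ k)).image ⇑σ)
      - F ((Finset.univ.filter (fun j => j < k)).image ⇑σ))

/-- `f` is the Lovász extension of `F`. -/
def IsLovasz {ι : Type} [Fintype ι] [LinearOrder ι] (F : Finset ι → ℝ)
    (f : (ι → ℝ) → ℝ) : Prop :=
  ∀ (x : ι → ℝ) (σ : Equiv.Perm ι), SortsDesc x σ → f x = lovaszVal F x σ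

/-!
For an ordering of the ground set, pair `x` with the greedy vector of `F` along that ordering. For
submodular `F`, swapping two adjacent elements into decreasing order of `x` does not decrease this
pairing, so decreasing orderings maximize it: this gives the convexity of the Lovász extension `f`
and shows that every decreasing ordering computes `f x`. If `x` is larger on `T` than off `T`, a
decreasing ordering may list `T` first, and the pairing then splits into those for the restriction
`F_T` and the contraction `F^T`, so the proximal objective splits as well. Since `x*` is strictly
larger on `T` than off `T`, gluing shows that `x*|_T` and `x*|_{V∖T}` are local minimizers of the
two split objectives; these are strictly convex, so `x*|_T = y` and `x*|_{V∖T} = z`.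
-/

open Topology

section Greedy

variable {ι : Type} [DecidableEq ι] (F : Finset ι → ℝ) (x : ι → ℝ)

/-- `greedySum F x B [a₁, …, aₘ]` is `⟨x, s⟩` for the greedy vector `s` of `F` along the chain
`B ⊆ B ∪ {a₁} ⊆ ⋯ ⊆ B ∪ {a₁, …, aₘ}`. -/
def greedySum : Finset ι → List ι → ℝ
  | _, [] => 0
  | B, a :: L => x a * (F (insert a B) - F B) + greedySum (insert a B) L

@[simp] lemma greedySum_nil (B : Finset ι) : greedySum F x B [] = 0 := rfl

@[simp] lemma greedySum_cons (B : Finset ι) (a : ι) (L : List ι) :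
    greedySum F x B (a :: L) = x a * (F (insert a B) - F B) + greedySum F x (insert a B) L :=
  rfl

lemma greedySum_append (L₁ L₂ : List ι) (B : Finset ι) :
    greedySum F x B (L₁ ++ L₂) = greedySum F x B L₁ + greedySum F x (L₁.toFinset ∪ B) L₂ := by
  induction L₁ generalizing B with
  | nil => simp
  | cons a L₁ ih =>
    simp only [List.cons_append, greedySum_cons, ih, List.toFinset_cons, Finset.union_insert,
      Finset.insert_union]
    ring

lemma greedySum_smul_add_smul (y : ι → ℝ) (a b : ℝ) (L : List ι) (B : Finset ι) :
    greedySum F (a • x + b • y) B L = a * greedySum F x B L + b * greedySum F y B L := by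
  induction L generalizing B with
  | nil => simp
  | cons c L ih => simp only [greedySum_cons, ih, Pi.add_apply, Pi.smul_apply, smul_eq_mul]; ring

lemma greedySum_sub_const (c : ℝ) (L : List ι) (B : Finset ι) :
    greedySum (fun S => F S - c) x B L = greedySum F x B L := by
  induction L generalizing B with
  | nil => rfl
  | cons a L ih => simp only [greedySum_cons, ih, sub_sub_sub_cancel_right]

lemma greedySum_union_right (C : Finset ι) (L : List ι) (B : Finset ι) :
    greedySum (fun A => F (A ∪ C)) x B L = greedySum F x (B ∪ C) L := by
  induction L generalizing B with
  | nil => rfl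
  | cons a L ih => simp only [greedySum_cons, ih, Finset.insert_union]

lemma greedySum_map {κ : Type} [DecidableEq κ] (g : κ ↪ ι) (L : List κ) (B : Finset κ) :
    greedySum (fun S => F (S.map g)) (x ∘ g) B L = greedySum F x (B.map g) (L.map g) := by
  induction L generalizing B with
  | nil => rfl
  | cons a L ih =>
    simp only [greedySum_cons, ih, Finset.map_insert, List.map_cons, Function.comp_apply]

variable {F x}

lemma Submodular.greedySum_swap_le (hF : Submodular F) {a c : ι} (hca : x c ≤ x a)
    (L : List ι) (B : Finset ι) :
    greedySum F x B (c :: a :: L) ≤ greedySum F x B (a :: c :: L) := by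
  rcases eq_or_ne a c with rfl | hac
  · rfl
  have hsub : F (insert a (insert c B)) + F B ≤ F (insert a B) + F (insert c B) := by
    have h := hF (insert a B) (insert c B)
    have hu : insert a B ∪ insert c B = insert a (insert c B) := by
      ext; simp only [Finset.mem_union, Finset.mem_insert]; tauto
    have hi : insert a B ∩ insert c B = B := by
      ext; simp only [Finset.mem_inter, Finset.mem_insert]; aesop
    rwa [hu, hi] at h
  simp only [greedySum_cons, Finset.insert_comm c a]
  nlinarith

lemma Submodular.greedySum_append_cons_le (hF : Submodular F) {a : ι} {L₁ : List ι}
    (hL₁ : ∀ c ∈ L₁, x c ≤ x a) (L₂ : List ι) (B : Finset ι) :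
    greedySum F x B (L₁ ++ a :: L₂) ≤ greedySum F x B (a :: (L₁ ++ L₂)) := by
  induction L₁ generalizing B with
  | nil => rfl
  | cons c L₁ ih =>
    calc greedySum F x B (c :: L₁ ++ a :: L₂)
        ≤ greedySum F x B (c :: a :: (L₁ ++ L₂)) := by
          simp only [List.cons_append, greedySum_cons, add_le_add_iff_left]
          exact ih (fun d hd => hL₁ d (List.mem_cons_of_mem c hd)) _
      _ ≤ greedySum F x B (a :: c :: (L₁ ++ L₂)) :=
          hF.greedySum_swap_le (hL₁ c List.mem_cons_self) _ B

lemma Submodular.greedySum_le_of_perm (hF : Submodular F) {L L₀ : List ι}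
    (hL₀ : L₀.Pairwise (fun a b => x b ≤ x a)) (hp : L.Perm L₀) (B : Finset ι) :
    greedySum F x B L ≤ greedySum F x B L₀ := by
  induction L₀ generalizing L B with
  | nil => rw [List.Perm.eq_nil hp]
  | cons a L₀ ih =>
    obtain ⟨L₁, L₂, rfl⟩ := List.append_of_mem (hp.mem_iff.2 List.mem_cons_self)
    have hrest : (L₁ ++ L₂).Perm L₀ := (List.perm_middle.symm.trans hp).cons_inv
    have hmax : ∀ c ∈ L₁, x c ≤ x a := fun c hc =>
      List.rel_of_pairwise_cons hL₀ (hrest.mem_iff.1 (List.mem_append_left L₂ hc))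
    calc greedySum F x B (L₁ ++ a :: L₂)
        ≤ greedySum F x B (a :: (L₁ ++ L₂)) := hF.greedySum_append_cons_le hmax L₂ B
      _ ≤ greedySum F x B (a :: L₀) := by
          simp only [greedySum_cons, add_le_add_iff_left]
          exact ih (List.pairwise_cons.1 hL₀).2 hrest _

lemma Submodular.greedySum_eq_of_perm (hF : Submodular F) {L L₀ : List ι}
    (hL : L.Pairwise (fun a b => x b ≤ x a)) (hL₀ : L₀.Pairwise (fun a b => x b ≤ x a))
    (hp : L.Perm L₀) (B : Finset ι) :
    greedySum F x B L = greedySum F x B L₀ :=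
  le_antisymm (hF.greedySum_le_of_perm hL₀ hp B) (hF.greedySum_le_of_perm hL hp.symm B)

end Greedy

lemma greedySum_map_eq_sum {ι β : Type} [LinearOrder ι] [DecidableEq β] (F : Finset β → ℝ)
    (x : β → ℝ) (g : ι → β) {l : List ι} (hl : l.Pairwise (· < ·)) (B : Finset β) :
    greedySum F x B (l.map g) = ∑ k ∈ l.toFinset, x (g k) *
      (F (B ∪ (l.toFinset.filter (· ≤ k)).image g)
        - F (B ∪ (l.toFinset.filter (· < k)).image g)) := by
  induction l generalizing B with
  | nil => simp
  | cons a l ih =>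
    obtain ⟨ha, hl⟩ := List.pairwise_cons.1 hl
    have ha' : a ∉ l.toFinset := fun h => lt_irrefl a (ha a (List.mem_toFinset.1 h))
    rw [List.map_cons, greedySum_cons, ih hl, List.toFinset_cons, Finset.sum_insert ha']
    congr 1
    · have hle : (insert a l.toFinset).filter (· ≤ a) = {a} := by
        ext k
        simp only [Finset.mem_filter, Finset.mem_insert, List.mem_toFinset, Finset.mem_singleton]
        exact ⟨fun ⟨h, hk⟩ => h.resolve_right fun hk' => (ha k hk').not_ge hk,
          fun h => ⟨Or.inl h, h.le⟩⟩
      have hlt : (insert a l.toFinset).filter (· < a) = ∅ := by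
        ext k
        simp only [Finset.mem_filter, Finset.mem_insert, List.mem_toFinset, Finset.notMem_empty,
          iff_false, not_and]
        rintro (rfl | hk) <;> [exact lt_irrefl k; exact (ha k hk).asymm]
      rw [hle, hlt, Finset.image_singleton, Finset.image_empty, Finset.union_empty,
        Finset.union_singleton]
    · refine Finset.sum_congr rfl fun k hk => ?_
      have hak : a < k := ha k (List.mem_toFinset.1 hk)
      rw [Finset.filter_insert, if_pos hak.le, Finset.filter_insert, if_pos hak,
        Finset.image_insert, Finset.image_insert, Finset.union_insert, Finset.union_insert,
        ← Finset.insert_union, ← Finset.insert_union]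

lemma List.perm_univ_toList {ι : Type} [Fintype ι] {L : List ι} (hL : L.Nodup)
    (hmem : ∀ i, i ∈ L) : L.Perm (univ : Finset ι).toList :=
  (List.perm_ext_iff_of_nodup hL (nodup_toList _)).2 fun i => by simp [hmem]

section Lovasz

variable {ι : Type} [Fintype ι] [LinearOrder ι] {F : Finset ι → ℝ} {f : (ι → ℝ) → ℝ}

lemma lovaszVal_eq_greedySum (F : Finset ι → ℝ) (x : ι → ℝ) (σ : Equiv.Perm ι) :
    lovaszVal F x σ = greedySum F x ∅ ((univ.sort (· ≤ ·)).map σ) := by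
  rw [greedySum_map_eq_sum F x σ (sortedLT_sort univ).pairwise, sort_toFinset]
  simp only [lovaszVal, Finset.empty_union]

lemma exists_sortsDesc (x : ι → ℝ) : ∃ σ : Equiv.Perm ι, SortsDesc x σ := by
  let e : Fin (Fintype.card ι) ≃o ι := monoEquivOfFin ι rfl
  let g : Fin (Fintype.card ι) → ℝᵒᵈ := fun k => OrderDual.toDual (x (e k))
  exact ⟨e.symm.toEquiv.trans ((Tuple.sort g).trans e.toEquiv),
    fun j k hjk => Tuple.monotone_sort g (e.symm.monotone hjk)⟩

lemma IsLovasz.exists_eq_greedySum (hf : IsLovasz F f) (x : ι → ℝ) :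
    ∃ L : List ι, L.Pairwise (fun a b => x b ≤ x a) ∧ L.Perm (univ : Finset ι).toList ∧
      f x = greedySum F x ∅ L := by
  obtain ⟨σ, hσ⟩ := exists_sortsDesc x
  refine ⟨(univ.sort (· ≤ ·)).map σ,
    List.pairwise_map.2 ((sortedLT_sort univ).pairwise.imp fun hjk => hσ _ _ hjk.le),
    List.perm_univ_toList ((sort_nodup _ _).map σ.injective) fun i => ?_,
    (hf x σ hσ).trans (lovaszVal_eq_greedySum F x σ)⟩
  exact List.mem_map.2 ⟨σ.symm i, by simp, σ.apply_symm_apply i⟩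

lemma IsLovasz.eq_greedySum (hF : Submodular F) (hf : IsLovasz F f) {x : ι → ℝ} {L : List ι}
    (hL : L.Pairwise (fun a b => x b ≤ x a)) (hperm : L.Perm (univ : Finset ι).toList) :
    f x = greedySum F x ∅ L := by
  obtain ⟨L₀, hL₀, hL₀p, hfx⟩ := hf.exists_eq_greedySum x
  rw [hfx, hF.greedySum_eq_of_perm hL₀ hL (hL₀p.trans hperm.symm)]

theorem IsLovasz.convexOn (hF : Submodular F) (hf : IsLovasz F f) :
    ConvexOn ℝ Set.univ f := by
  refine ⟨convex_univ, fun x _ y _ a b ha hb _ => ?_⟩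
  obtain ⟨L, hL, hLp, hfL⟩ := hf.exists_eq_greedySum (a • x + b • y)
  obtain ⟨Lx, hLx, hLxp, hfx⟩ := hf.exists_eq_greedySum x
  obtain ⟨Ly, hLy, hLyp, hfy⟩ := hf.exists_eq_greedySum y
  rw [hfL, hfx, hfy, greedySum_smul_add_smul, smul_eq_mul, smul_eq_mul]
  gcongr
  · exact hF.greedySum_le_of_perm hLx (hLp.trans hLxp.symm) ∅
  · exact hF.greedySum_le_of_perm hLy (hLp.trans hLyp.symm) ∅

end Lovasz

section Minors

def restriction {ι : Type} (F : Finset ι → ℝ) (T : Finset ι) (S : Finset {i // i ∈ T}) : ℝ :=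
  F (S.map (Function.Embedding.subtype _))

variable {ι : Type} [DecidableEq ι] {F : Finset ι → ℝ}

def contraction [Fintype ι] (F : Finset ι → ℝ) (T : Finset ι) (S : Finset {i // i ∈ Tᶜ}) : ℝ :=
  F (S.map (Function.Embedding.subtype _) ∪ T) - F T

lemma Submodular.comp_map {κ : Type} [DecidableEq κ] (hF : Submodular F) (g : κ ↪ ι) :
    Submodular (fun S : Finset κ => F (S.map g)) := fun S T => by
  simpa only [Finset.map_union, Finset.map_inter] using hF (S.map g) (T.map g)

lemma Submodular.union_right_sub (hF : Submodular F) (C : Finset ι) (c : ℝ) :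
    Submodular (fun A => F (A ∪ C) - c) := fun S T => by
  have h := hF (S ∪ C) (T ∪ C)
  rw [← Finset.union_union_distrib_right, ← Finset.inter_union_distrib_right] at h
  dsimp only
  linarith

lemma Submodular.restriction (hF : Submodular F) (T : Finset ι) :
    Submodular (restriction F T) :=
  hF.comp_map _

lemma Submodular.contraction [Fintype ι] (hF : Submodular F) (T : Finset ι) :
    Submodular (contraction F T) :=
  (hF.union_right_sub T (F T)).comp_map _

end Minors

lemma strictConvexOn_univ_sum_apply {κ : Type} [Fintype κ] {φ : κ → ℝ → ℝ}
    (hφ : ∀ i, StrictConvexOn ℝ Set.univ (φ i)) :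
    StrictConvexOn ℝ Set.univ (fun w : κ → ℝ => ∑ i, φ i (w i)) := by
  refine ⟨convex_univ, fun u _ v _ huv a b ha hb hab => ?_⟩
  obtain ⟨i₀, hi₀⟩ := Function.ne_iff.1 huv
  simp only [Pi.add_apply, Pi.smul_apply, smul_eq_mul, Finset.mul_sum, ← Finset.sum_add_distrib]
  refine Finset.sum_lt_sum (fun i _ => ?_) ⟨i₀, Finset.mem_univ _, ?_⟩
  · exact (hφ i).convexOn.2 (Set.mem_univ _) (Set.mem_univ _) ha.le hb.le hab
  · exact (hφ i₀).2 (Set.mem_univ _) (Set.mem_univ _) hi₀ ha hb hab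

lemma StrictConvexOn.eq_of_isLocalMin_of_forall_le {E : Type} [AddCommGroup E] [Module ℝ E]
    [TopologicalSpace E] [IsTopologicalAddGroup E] [ContinuousSMul ℝ E] {g : E → ℝ}
    (hg : StrictConvexOn ℝ Set.univ g) {a b : E} (ha : IsLocalMin g a) (hb : ∀ w, g b ≤ g w) :
    a = b :=
  hg.eq_of_isMinOn (fun w _ => IsMinOn.of_isLocalMin_of_convex_univ ha hg.convexOn w)
    (fun w _ => hb w) (Set.mem_univ a) (Set.mem_univ b)

def proxObjective {κ : Type} [Fintype κ] (g : (κ → ℝ) → ℝ) (h : κ → ℝ → ℝ) (x : κ → ℝ) : ℝ :=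
  g x + ∑ i, h i (x i)

lemma IsLovasz.strictConvexOn_proxObjective {κ : Type} [Fintype κ] [LinearOrder κ]
    {G : Finset κ → ℝ} {g : (κ → ℝ) → ℝ} (hg : IsLovasz G g) (hG : Submodular G)
    {φ : κ → ℝ → ℝ} (hφ : ∀ i, StrictConvexOn ℝ Set.univ (φ i)) :
    StrictConvexOn ℝ Set.univ (proxObjective g φ) :=
  (hg.convexOn hG).add_strictConvexOn (strictConvexOn_univ_sum_apply hφ)

section Splitting

variable {ι : Type} [Fintype ι] [LinearOrder ι] {F : Finset ι → ℝ} {f : (ι → ℝ) → ℝ}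
  {T : Finset ι} {fT : ({i // i ∈ T} → ℝ) → ℝ} {fC : ({i // i ∈ Tᶜ} → ℝ) → ℝ}
  {h : ι → ℝ → ℝ}

theorem IsLovasz.eq_add_of_separated (hF : Submodular F) (hf : IsLovasz F f)
    (hfT : IsLovasz (restriction F T) fT) (hfC : IsLovasz (contraction F T) fC)
    {x : ι → ℝ} (hx : ∀ i ∈ T, ∀ j ∉ T, x j ≤ x i) :
    f x = fT (fun i => x i) + fC (fun i => x i) := by
  set gT := Function.Embedding.subtype (· ∈ T)
  set gC := Function.Embedding.subtype (· ∈ Tᶜ)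
  obtain ⟨LT, hLT, hLTp, hfT⟩ := hfT.exists_eq_greedySum (x ∘ gT)
  obtain ⟨LC, hLC, hLCp, hfC⟩ := hfC.exists_eq_greedySum (x ∘ gC)
  have hmemT : ∀ i, i ∈ LT.map gT ↔ i ∈ T := fun i => by
    simp [gT, hLTp.mem_iff]
  have hmemC : ∀ i, i ∈ LC.map gC ↔ i ∉ T := fun i => by
    simp [gC, hLCp.mem_iff]
  have hsorted : (LT.map gT ++ LC.map gC).Pairwise (fun a b => x b ≤ x a) :=
    List.pairwise_append.2 ⟨List.pairwise_map.2 hLT, List.pairwise_map.2 hLC,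
      fun a ha b hb => hx a ((hmemT a).1 ha) b ((hmemC b).1 hb)⟩
  have hperm : (LT.map gT ++ LC.map gC).Perm (univ : Finset ι).toList := by
    refine List.perm_univ_toList (List.nodup_append.2 ⟨?_, ?_, ?_⟩) fun i => ?_
    · exact (hLTp.nodup_iff.2 (nodup_toList _)).map gT.injective
    · exact (hLCp.nodup_iff.2 (nodup_toList _)).map gC.injective
    · rintro a ha b hb rfl
      exact (hmemC a).1 hb ((hmemT a).1 ha)
    · by_cases hi : i ∈ T
      · exact List.mem_append_left _ ((hmemT i).2 hi)
      · exact List.mem_append_right _ ((hmemC i).2 hi)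
  have htoFinset : (LT.map gT).toFinset ∪ ∅ = (∅ : Finset {i // i ∈ Tᶜ}).map gC ∪ T := by
    ext i
    simp [hmemT]
  rw [hf.eq_greedySum hF hsorted hperm, greedySum_append, htoFinset, ← greedySum_union_right,
    ← greedySum_map, ← Finset.map_empty gT, ← greedySum_map,
    ← greedySum_sub_const (fun S => F (S.map gC ∪ T)) _ (F T)]
  exact congrArg₂ (· + ·) hfT.symm hfC.symm

lemma proxObjective_eq_add_of_separated (hF : Submodular F) (hf : IsLovasz F f)
    (hfT : IsLovasz (restriction F T) fT) (hfC : IsLovasz (contraction F T) fC)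
    {x : ι → ℝ} (hx : ∀ i ∈ T, ∀ j ∉ T, x j ≤ x i) :
    proxObjective f h x = proxObjective fT (fun i => h i) (fun i => x i)
      + proxObjective fC (fun i => h i) (fun i => x i) := by
  rw [proxObjective, proxObjective, proxObjective, hf.eq_add_of_separated hF hfT hfC hx,
    Finset.sum_coe_sort T (fun i => h i (x i)), Finset.sum_coe_sort Tᶜ (fun i => h i (x i)),
    ← Finset.sum_add_sum_compl T]
  ring

lemma proxObjective_add_le_of_separated (hF : Submodular F) (hf : IsLovasz F f)
    (hfT : IsLovasz (restriction F T) fT) (hfC : IsLovasz (contraction F T) fC)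
    {x₀ : ι → ℝ} (hmin : ∀ x, proxObjective f h x₀ ≤ proxObjective f h x)
    (hx₀ : ∀ i ∈ T, ∀ j ∉ T, x₀ j ≤ x₀ i) {u : {i // i ∈ T} → ℝ} {v : {i // i ∈ Tᶜ} → ℝ}
    (huv : ∀ i j, v j ≤ u i) :
    proxObjective fT (fun i => h i) (fun i => x₀ i)
        + proxObjective fC (fun i => h i) (fun i => x₀ i)
      ≤ proxObjective fT (fun i => h i) u + proxObjective fC (fun i => h i) v := by
  let x : ι → ℝ := fun i => if hi : i ∈ T then u ⟨i, hi⟩ else v ⟨i, Finset.mem_compl.2 hi⟩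
  have hxu : (fun i : {i // i ∈ T} => x i) = u := funext fun i => dif_pos i.2
  have hxv : (fun i : {i // i ∈ Tᶜ} => x i) = v :=
    funext fun i => dif_neg (Finset.mem_compl.1 i.2)
  have hx : ∀ i ∈ T, ∀ j ∉ T, x j ≤ x i := fun i hi j hj => by
    simp only [x, dif_pos hi, dif_neg hj]
    exact huv _ _
  rw [← proxObjective_eq_add_of_separated hF hf hfT hfC hx₀, ← hxu, ← hxv,
    ← proxObjective_eq_add_of_separated hF hf hfT hfC hx]
  exact hmin x

lemma isLocalMin_proxObjective_restriction (hF : Submodular F) (hf : IsLovasz F f)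
    (hfT : IsLovasz (restriction F T) fT) (hfC : IsLovasz (contraction F T) fC)
    {x₀ : ι → ℝ} (hmin : ∀ x, proxObjective f h x₀ ≤ proxObjective f h x)
    (hx₀ : ∀ i ∈ T, ∀ j ∉ T, x₀ j < x₀ i) :
    IsLocalMin (proxObjective fT (fun i => h i)) (fun i => x₀ i) := by
  have hnear : ∀ᶠ w in 𝓝 (fun i : {i // i ∈ T} => x₀ i), ∀ i (j : {j // j ∈ Tᶜ}), x₀ j < w i :=
    Filter.eventually_all.2 fun i => Filter.eventually_all.2 fun j =>
      ((continuous_apply i).tendsto _).eventually_const_lt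
        (hx₀ i i.2 j (Finset.mem_compl.1 j.2))
  filter_upwards [hnear] with w hw
  have := proxObjective_add_le_of_separated hF hf hfT hfC hmin
    (fun i hi j hj => (hx₀ i hi j hj).le) (u := w) (v := fun j => x₀ j) fun i j => (hw i j).le
  linarith

lemma isLocalMin_proxObjective_contraction (hF : Submodular F) (hf : IsLovasz F f)
    (hfT : IsLovasz (restriction F T) fT) (hfC : IsLovasz (contraction F T) fC)
    {x₀ : ι → ℝ} (hmin : ∀ x, proxObjective f h x₀ ≤ proxObjective f h x)
    (hx₀ : ∀ i ∈ T, ∀ j ∉ T, x₀ j < x₀ i) :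
    IsLocalMin (proxObjective fC (fun i => h i)) (fun i => x₀ i) := by
  have hnear : ∀ᶠ w in 𝓝 (fun j : {j // j ∈ Tᶜ} => x₀ j), ∀ (i : {i // i ∈ T}) j, w j < x₀ i :=
    Filter.eventually_all.2 fun i => Filter.eventually_all.2 fun j =>
      ((continuous_apply j).tendsto _).eventually_lt_const
        (hx₀ i i.2 j (Finset.mem_compl.1 j.2))
  filter_upwards [hnear] with w hw
  have := proxObjective_add_le_of_separated hF hf hfT hfC hmin
    (fun i hi j hj => (hx₀ i hi j hj).le) (u := fun i => x₀ i) (v := w) fun i j => (hw i j).le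
  linarith

end Splitting

theorem statement12_general {n : ℕ} (F : Finset (Fin n) → ℝ) (hF : Submodular F)
    (f : (Fin n → ℝ) → ℝ) (hf : IsLovasz F f)
    (h : Fin n → ℝ → ℝ)
    (hconv : ∀ i, StrictConvexOn ℝ (Set.univ : Set ℝ) (h i))
    (xstar : Fin n → ℝ)
    (hxstar : ∀ x : Fin n → ℝ, f xstar + ∑ i, h i (xstar i) ≤ f x + ∑ i, h i (x i))
    (lam : ℝ) (T : Finset (Fin n))
    (hT : T = Finset.univ.filter (fun i => lam ≤ xstar i))
    (fT : ({i : Fin n // i ∈ T} → ℝ) → ℝ)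
    (hfT : IsLovasz (fun S : Finset {i : Fin n // i ∈ T} =>
      F (S.map (Function.Embedding.subtype _))) fT)
    (fC : ({i : Fin n // i ∈ Tᶜ} → ℝ) → ℝ)
    (hfC : IsLovasz (fun S : Finset {i : Fin n // i ∈ Tᶜ} =>
      F (S.map (Function.Embedding.subtype _) ∪ T) - F T) fC)
    (y : {i : Fin n // i ∈ T} → ℝ)
    (hy : ∀ w : {i : Fin n // i ∈ T} → ℝ,
      fT y + ∑ i, h i.val (y i) ≤ fT w + ∑ i, h i.val (w i))
    (z : {i : Fin n // i ∈ Tᶜ} → ℝ)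
    (hz : ∀ w : {i : Fin n // i ∈ Tᶜ} → ℝ,
      fC z + ∑ i, h i.val (z i) ≤ fC w + ∑ i, h i.val (w i)) :
    (∀ j : {i : Fin n // i ∈ T}, xstar j.val = y j) ∧
    (∀ j : {i : Fin n // i ∈ Tᶜ}, xstar j.val = z j) := by
  have hsep : ∀ i ∈ T, ∀ j ∉ T, xstar j < xstar i := fun i hi j hj => by
    subst hT
    simp only [Finset.mem_filter, Finset.mem_univ, true_and, not_le] at hi hj
    exact hj.trans_le hi
  have hyT : (fun j : {i // i ∈ T} => xstar j) = y :=
    (hfT.strictConvexOn_proxObjective (hF.restriction T) fun i => hconv i)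
      |>.eq_of_isLocalMin_of_forall_le
        (isLocalMin_proxObjective_restriction hF hf hfT hfC hxstar hsep) hy
  have hzC : (fun j : {i // i ∈ Tᶜ} => xstar j) = z :=
    (hfC.strictConvexOn_proxObjective (hF.contraction T) fun i => hconv i)
      |>.eq_of_isLocalMin_of_forall_le
        (isLocalMin_proxObjective_contraction hF hf hfT hfC hxstar hsep) hz
  exact ⟨congrFun hyT, congrFun hzC⟩

/-- Proposition: splits: let `x*` be the unique minimizer of
`f(x) + Σ_i h_i(x_i)`, and `T = {i : x*_i ≥ λ̄}` a level set of `x*`.  If `y`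
minimizes the proximal problem for the restriction `F_T` on `ℝ^T` and `z`
minimizes the proximal problem for the contraction `F^T` on `ℝ^{V∖T}`, then
`x*` agrees with `y` on `T` and with `z` on `V∖T`. -/
theorem statement12 {n : ℕ} (F : Finset (Fin n) → ℝ) (hF0 : F ∅ = 0) (hF : Submodular F)
    (f : (Fin n → ℝ) → ℝ) (hf : IsLovasz F f)
    (h h' : Fin n → ℝ → ℝ)
    (hconv : ∀ i, StrictConvexOn ℝ (Set.univ : Set ℝ) (h i))
    (hderiv : ∀ i t, HasDerivAt (h i) (h' i t) t)
    (hcont : ∀ i, Continuous (h' i))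
    (hsupTop : ∀ i M, ∃ t, M ≤ h' i t)
    (hinfBot : ∀ i M, ∃ t, h' i t ≤ M)
    (xstar : Fin n → ℝ)
    (hxstar : ∀ x : Fin n → ℝ, f xstar + ∑ i, h i (xstar i) ≤ f x + ∑ i, h i (x i))
    (lam : ℝ) (T : Finset (Fin n))
    (hT : T = Finset.univ.filter (fun i => lam ≤ xstar i))
    (fT : ({i : Fin n // i ∈ T} → ℝ) → ℝ)
    (hfT : IsLovasz (fun S : Finset {i : Fin n // i ∈ T} =>
      F (S.map (Function.Embedding.subtype _))) fT)
    (fC : ({i : Fin n // i ∈ Tᶜ} → ℝ) → ℝ)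
    (hfC : IsLovasz (fun S : Finset {i : Fin n // i ∈ Tᶜ} =>
      F (S.map (Function.Embedding.subtype _) ∪ T) - F T) fC)
    (y : {i : Fin n // i ∈ T} → ℝ)
    (hy : ∀ w : {i : Fin n // i ∈ T} → ℝ,
      fT y + ∑ i, h i.val (y i) ≤ fT w + ∑ i, h i.val (w i))
    (z : {i : Fin n // i ∈ Tᶜ} → ℝ)
    (hz : ∀ w : {i : Fin n // i ∈ Tᶜ} → ℝ,
      fC z + ∑ i, h i.val (z i) ≤ fC w + ∑ i, h i.val (w i)) :
    (∀ j : {i : Fin n // i ∈ T}, xstar j.val = y j) ∧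
    (∀ j : {i : Fin n // i ∈ Tᶜ}, xstar j.val = z j) :=
  statement12_general F hF f hf h hconv xstar hxstar lam T hT fT hfT fC hfC y hy z hz
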